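/- Let X be a Banach lattice, E a Banach space, and T : X → E a nonzero bounded linear operator. (i) If (Y, U, V) is a Class D factorization of T, then U⁻¹(B_Y) is a closed, convex, solid subset of X satisfying c⁻¹·B_X ⊆ U⁻¹(B_Y) ⊆ c·T⁻¹(B_E) for some c ≥ 1. (ii) Conversely, for every closed, convex, solid subset S of X satisfying c⁻¹·B_X ⊆ S ⊆ c·T⁻¹(B_E) for some c ≥ 1, there exists a Class D factorization (Y, U, V) of T with U⁻¹(B_Y) = S. (iii) If (Y₁, U₁, V₁) and (Y₂, U₂, V₂) are Class D factorizations of T with U₁⁻¹(B_{Y₁}) = U₂⁻¹(B_{Y₂}), then there exists a surjective lattice isometry ι : Y₁ → Y₂ with U₂ = ι∘U₁ and V₁ = V₂∘ι. -/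

import Mathlib

/-- Bundled Banach lattice: a complete normed lattice (solid norm, order-compatible
vector space structure over `ℝ`). -/
structure BanachLat where
  carrier : Type
  [nag : NormedAddCommGroup carrier]
  [lat : Lattice carrier]
  [hsn : HasSolidNorm carrier]
  [ioam : IsOrderedAddMonoid carrier]
  [nsp : NormedSpace ℝ carrier]
  [osm : PosSMulStrictMono ℝ carrier]
  [cs : CompleteSpace carrier]

attribute [instance] BanachLat.nag BanachLat.lat BanachLat.hsn BanachLat.ioam BanachLat.nsp BanachLat.osm BanachLat.cs

instance : CoeSort BanachLat Type := ⟨BanachLat.carrier⟩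

noncomputable section

open scoped Pointwise

/-- A map between lattices is a lattice homomorphism if it preserves binary suprema. -/
def IsLatHom {X Y : Type*} [Lattice X] [Lattice Y] (f : X → Y) : Prop :=
  ∀ a b : X, f (a ⊔ b) = f a ⊔ f b

/-- An operator `U : X → Y` between Banach lattices is of Class 𝒟 if it is a lattice
homomorphism with dense range. -/
def IsClassD {X Y : Type*} [NormedAddCommGroup X] [Lattice X] [HasSolidNorm X]
    [IsOrderedAddMonoid X] [NormedSpace ℝ X]
    [NormedAddCommGroup Y] [Lattice Y] [HasSolidNorm Y]
    [IsOrderedAddMonoid Y] [NormedSpace ℝ Y] (U : X →L[ℝ] Y) : Prop :=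
  IsLatHom ⇑U ∧ DenseRange ⇑U

/-- A subset of a Banach lattice is solid if `|u| ≤ |v|` and `v ∈ s` imply `u ∈ s`. -/
def IsSolid {X : Type*} [Lattice X] [AddCommGroup X] (s : Set X) : Prop :=
  ∀ ⦃u v : X⦄, |u| ≤ |v| → v ∈ s → u ∈ s

/-!
(i) is a direct check. What ties the three parts together is that the gauge of `U⁻¹(B_Y)` is
`x ↦ ‖U x‖`.

(ii) The gauge `p` of `S` is a solid seminorm with `p ≤ c ‖·‖` and `‖T ·‖ ≤ c p`. Completing `X`
for `p` gives a Banach lattice: for a solid seminorm `⊔` and `⊓` are Lipschitz, so they extend to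
the completion, and every lattice law passes to the limit. The canonical map is of Class D, the
preimage of its unit ball is `{p ≤ 1} = S`, and `T` extends continuously through it.

(iii) Equal unit-ball preimages force `‖U₁ x‖ = ‖U₂ x‖`, so `U₁ x ↦ U₂ x` extends from the dense
range of `U₁` to a surjective isometry, which preserves `⊔` by continuity.
-/

open Metric Topology UniformSpace

section VectorLattice

variable {X : Type*} [Lattice X] [AddCommGroup X] [Module ℝ X] [PosSMulStrictMono ℝ X]

theorem smul_sup_of_nonneg {c : ℝ} (hc : 0 ≤ c) (a b : X) : c • (a ⊔ b) = c • a ⊔ c • b := by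
  rcases hc.eq_or_lt with rfl | hc
  · simp
  · exact (OrderIso.smulRight hc).map_sup a b

theorem abs_smul_of_nonneg {c : ℝ} (hc : 0 ≤ c) (x : X) : |c • x| = c • |x| := by
  rw [abs, abs, smul_sup_of_nonneg hc, smul_neg]

theorem IsSolid.smul_set {S : Set X} (hS : IsSolid S) {t : ℝ} (ht : 0 < t) :
    IsSolid (t • S) := by
  intro u v huv hv
  rw [Set.mem_smul_set_iff_inv_smul_mem₀ ht.ne'] at hv ⊢
  refine hS ?_ hv
  rw [abs_smul_of_nonneg (inv_nonneg.2 ht.le), abs_smul_of_nonneg (inv_nonneg.2 ht.le)]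
  exact smul_le_smul_of_nonneg_left huv (inv_nonneg.2 ht.le)

theorem gauge_le_gauge_of_abs_le {S : Set X} (hS : IsSolid S) (habs : Absorbent ℝ S) {u v : X}
    (huv : |u| ≤ |v|) : gauge S u ≤ gauge S v :=
  csInf_le_csInf ⟨0, fun _ hr => hr.1.le⟩ habs.gauge_set_nonempty
    fun _ ⟨hr, hv⟩ => ⟨hr, hS.smul_set hr huv hv⟩

variable [IsOrderedAddMonoid X]

theorem abs_smul_le_abs {r : ℝ} (hr : |r| ≤ 1) (x : X) : |r • x| ≤ |x| := by
  have key : |(|r|) • x| ≤ |x| := by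
    rw [abs_smul_of_nonneg (abs_nonneg r)]
    simpa using smul_le_smul_of_nonneg_right hr (abs_nonneg x)
  rcases abs_choice r with h | h <;> rw [h] at key
  · exact key
  · rwa [neg_smul, abs_neg] at key

theorem IsSolid.balanced {S : Set X} (hS : IsSolid S) : Balanced ℝ S := by
  rintro r hr _ ⟨y, hy, rfl⟩
  exact hS (abs_smul_le_abs (by simpa using hr) y) hy

end VectorLattice

section LatHom

variable {X Y F : Type*} [Lattice X] [Lattice Y]

theorem IsLatHom.monotone {f : X → Y} (hf : IsLatHom f) : Monotone f := fun a b h => by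
  rw [← sup_eq_right] at h ⊢
  rw [← hf, h]

theorem IsLatHom.of_comp_denseRange {Z : Type*} [Lattice Z] [TopologicalSpace Y]
    [TopologicalSpace Z] [ContinuousSup Y] [ContinuousSup Z] [T2Space Z]
    {f : X → Y} {g : Y → Z} (hf : IsLatHom f) (hfd : DenseRange f) (hg : Continuous g)
    (hgf : IsLatHom (g ∘ f)) : IsLatHom g := fun a b => by
  induction a, b using hfd.induction_on₂ with
  | hp => exact isClosed_eq (by fun_prop) (by fun_prop)
  | h x y => simpa only [Function.comp_apply, hf x y] using hgf x y

variable [AddCommGroup X] [AddCommGroup Y] [FunLike F X Y] [AddMonoidHomClass F X Y]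

theorem IsLatHom.map_abs {f : F} (hf : IsLatHom f) (x : X) : f |x| = |f x| := by
  rw [abs, abs, hf, map_neg]

theorem IsSolid.preimage {f : F} (hf : IsLatHom f) {s : Set Y} (hs : IsSolid s) :
    IsSolid (f ⁻¹' s) := fun u v huv hv =>
  hs (by simpa only [hf.map_abs] using hf.monotone huv) hv

end LatHom

theorem isSolid_closedBall {Y : Type*} [NormedAddCommGroup Y] [Lattice Y] [HasSolidNorm Y]
    (r : ℝ) : IsSolid (closedBall (0 : Y) r) := fun u v huv hv => by
  rw [mem_closedBall_zero_iff] at hv ⊢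
  exact (HasSolidNorm.solid huv).trans hv

theorem gauge_preimage {E F 𝓕 : Type*} [AddCommGroup E] [Module ℝ E] [AddCommGroup F]
    [Module ℝ F] [FunLike 𝓕 E F] [LinearMapClass 𝓕 ℝ E F] (f : 𝓕) (s : Set F) (x : E) :
    gauge (f ⁻¹' s) x = gauge s (f x) := by
  simp only [gauge_def', Set.mem_preimage, map_smul]

section NormedGauge

variable {E F G 𝓕 : Type*} [NormedAddCommGroup E] [NormedSpace ℝ E]
  [NormedAddCommGroup F] [NormedSpace ℝ F] [NormedAddCommGroup G] [NormedSpace ℝ G]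
  [FunLike 𝓕 E F] [LinearMapClass 𝓕 ℝ E F]

theorem gauge_preimage_closedBall (f : 𝓕) (x : E) : gauge (f ⁻¹' closedBall 0 1) x = ‖f x‖ := by
  rw [gauge_preimage, gauge_closedBall zero_le_one, div_one]

theorem norm_le_mul_gauge_of_subset_smul {s : Set E} (hs : Absorbent ℝ s) (f : 𝓕) {c : ℝ}
    (hc : 0 < c) (h : s ⊆ c • f ⁻¹' closedBall 0 1) (x : E) : ‖f x‖ ≤ c * gauge s x := by
  have := gauge_mono hs h x
  rwa [gauge_smul_left_of_nonneg hc.le, Pi.smul_apply, smul_eq_mul, gauge_preimage_closedBall,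
    inv_mul_le_iff₀ hc] at this

theorem gauge_le_mul_norm_of_smul_closedBall_subset {s : Set E} {c : ℝ} (hc : 0 < c)
    (h : c⁻¹ • closedBall (0 : E) 1 ⊆ s) (x : E) : gauge s x ≤ c * ‖x‖ := by
  rw [smul_unitClosedBall, Real.norm_of_nonneg (inv_nonneg.2 hc.le)] at h
  have := mul_gauge_le_norm (ball_subset_closedBall.trans h) (x := x)
  rwa [inv_mul_le_iff₀ hc] at this

theorem preimage_closedBall_subset_smul (f : E →ₗ[ℝ] F) (g : E →ₗ[ℝ] G) {c : ℝ} (hc : 0 < c)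
    (h : ∀ x, ‖g x‖ ≤ c * ‖f x‖) : f ⁻¹' closedBall 0 1 ⊆ c • g ⁻¹' closedBall 0 1 :=
  fun x hx => by
    rw [Set.mem_smul_set_iff_inv_smul_mem₀ hc.ne', Set.mem_preimage, mem_closedBall_zero_iff,
      map_smul, norm_smul, Real.norm_of_nonneg (inv_nonneg.2 hc.le), inv_mul_le_iff₀ hc, mul_one]
    exact (h x).trans (mul_le_of_le_one_right hc.le (mem_closedBall_zero_iff.1 hx))

end NormedGauge

-- `HasSolidNorm` needs a `NormedAddCommGroup`; the completion below starts from a seminormed one.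
class HasSolidSeminorm (α : Type*) [SeminormedAddCommGroup α] [Lattice α] : Prop where
  solid : ∀ ⦃x y : α⦄, |x| ≤ |y| → ‖x‖ ≤ ‖y‖

namespace HasSolidSeminorm

variable {Z : Type*} [SeminormedAddCommGroup Z] [Lattice Z] [IsOrderedAddMonoid Z]
  [HasSolidSeminorm Z]

theorem norm_abs (x : Z) : ‖|x|‖ = ‖x‖ :=
  le_antisymm (solid (abs_abs x).le) (solid (abs_abs x).ge)

theorem lipschitzWith_sup_zero : LipschitzWith 1 fun x : Z => x ⊔ 0 :=
  LipschitzWith.of_dist_le_mul fun x y => by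
    simpa [dist_eq_norm] using solid (abs_sup_sub_sup_le_abs x y 0)

theorem uniformContinuous_sup : UniformContinuous fun p : Z × Z => p.1 ⊔ p.2 := by
  have h : (fun p : Z × Z => p.1 ⊔ p.2) = fun p => (p.1 - p.2) ⊔ 0 + p.2 := by
    ext p; rw [sup_add, sub_add_cancel, zero_add]
  rw [h]
  exact (lipschitzWith_sup_zero.uniformContinuous.comp
    (uniformContinuous_fst.sub uniformContinuous_snd)).add uniformContinuous_snd

theorem uniformContinuous_inf : UniformContinuous fun p : Z × Z => p.1 ⊓ p.2 := by
  have h : (fun p : Z × Z => p.1 ⊓ p.2) = fun p => -(-p.1 ⊔ -p.2) := by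
    ext p; rw [neg_sup, neg_neg, neg_neg]
  rw [h]
  exact (uniformContinuous_sup.comp
    (uniformContinuous_fst.neg.prodMk uniformContinuous_snd.neg)).neg

end HasSolidSeminorm

namespace UniformSpace.Completion

variable {Z : Type*} [SeminormedAddCommGroup Z] [Lattice Z] [IsOrderedAddMonoid Z]
  [HasSolidSeminorm Z]

instance : Max (Completion Z) := ⟨Completion.map₂ (· ⊔ ·)⟩

instance : Min (Completion Z) := ⟨Completion.map₂ (· ⊓ ·)⟩

theorem coe_sup (x y : Z) :
    ((x ⊔ y : Z) : Completion Z) = (x : Completion Z) ⊔ (y : Completion Z) :=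
  (map₂_coe_coe x y _ HasSolidSeminorm.uniformContinuous_sup).symm

theorem coe_inf (x y : Z) :
    ((x ⊓ y : Z) : Completion Z) = (x : Completion Z) ⊓ (y : Completion Z) :=
  (map₂_coe_coe x y _ HasSolidSeminorm.uniformContinuous_inf).symm

instance : ContinuousSup (Completion Z) := ⟨continuous_map₂ continuous_fst continuous_snd⟩

instance : ContinuousInf (Completion Z) := ⟨continuous_map₂ continuous_fst continuous_snd⟩

instance : Lattice (Completion Z) :=
  Lattice.mk'
    (fun a b => induction_on₂ a b (isClosed_eq (by fun_prop) (by fun_prop)) fun x y => by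
      rw [← coe_sup, ← coe_sup, sup_comm])
    (fun a b c => induction_on₃ a b c (isClosed_eq (by fun_prop) (by fun_prop)) fun x y z => by
      rw [← coe_sup, ← coe_sup, ← coe_sup, ← coe_sup, sup_assoc])
    (fun a b => induction_on₂ a b (isClosed_eq (by fun_prop) (by fun_prop)) fun x y => by
      rw [← coe_inf, ← coe_inf, inf_comm])
    (fun a b c => induction_on₃ a b c (isClosed_eq (by fun_prop) (by fun_prop)) fun x y z => by
      rw [← coe_inf, ← coe_inf, ← coe_inf, ← coe_inf, inf_assoc])
    (fun a b => induction_on₂ a b (isClosed_eq (by fun_prop) (by fun_prop)) fun x y => by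
      rw [← coe_inf, ← coe_sup, sup_inf_self])
    (fun a b => induction_on₂ a b (isClosed_eq (by fun_prop) (by fun_prop)) fun x y => by
      rw [← coe_sup, ← coe_inf, inf_sup_self])

theorem coe_abs (x : Z) : ((|x| : Z) : Completion Z) = |(x : Completion Z)| := by
  rw [abs, abs, coe_sup, coe_neg]

theorem add_sup_add_left (a b c : Completion Z) : (c + a) ⊔ (c + b) = c + (a ⊔ b) :=
  induction_on₃ a b c (isClosed_eq (by fun_prop) (by fun_prop)) fun x y z => by
    rw [← coe_add, ← coe_add, ← coe_sup, ← coe_sup, ← coe_add, ← add_sup]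

instance : IsOrderedAddMonoid (Completion Z) where
  add_le_add_left a b h c := by
    rw [← sup_eq_right] at h ⊢
    rw [add_comm a, add_comm b, add_sup_add_left, h]

-- Solidity is not a closed condition on pairs, but this inequality is, and it implies solidity.
theorem norm_abs_inf_abs_le (a b : Completion Z) : ‖|a| ⊓ |b|‖ ≤ ‖b‖ :=
  induction_on₂ a b (isClosed_le (by simp only [abs]; fun_prop) (by fun_prop)) fun x y => by
    rw [← coe_abs, ← coe_abs, ← coe_inf, norm_coe, norm_coe]
    calc ‖|x| ⊓ |y|‖ ≤ ‖|y|‖ := HasSolidSeminorm.solid <| by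
          rw [abs_of_nonneg (le_inf (abs_nonneg x) (abs_nonneg y)), abs_abs]
          exact inf_le_right
      _ = ‖y‖ := HasSolidSeminorm.norm_abs y

theorem norm_abs (a : Completion Z) : ‖|a|‖ = ‖a‖ :=
  induction_on a (isClosed_eq (by simp only [abs]; fun_prop) (by fun_prop)) fun x => by
    rw [← coe_abs, norm_coe, norm_coe, HasSolidSeminorm.norm_abs]

instance : HasSolidNorm (Completion Z) where
  solid a b h := by
    rw [← norm_abs a, ← inf_eq_left.2 h]
    exact norm_abs_inf_abs_le a b

variable [NormedSpace ℝ Z] [PosSMulStrictMono ℝ Z]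

theorem smul_sup_of_nonneg {c : ℝ} (hc : 0 ≤ c) (a b : Completion Z) :
    c • (a ⊔ b) = c • a ⊔ c • b :=
  induction_on₂ a b
    (isClosed_eq ((continuous_fst.sup continuous_snd).const_smul c)
      ((continuous_fst.const_smul c).sup (continuous_snd.const_smul c))) fun x y => by
    rw [← coe_sup, ← coe_smul, ← coe_smul, ← coe_smul, ← coe_sup, _root_.smul_sup_of_nonneg hc]

instance : PosSMulStrictMono ℝ (Completion Z) :=
  have : PosSMulMono ℝ (Completion Z) := .of_smul_nonneg fun c hc b hb => by
    rw [← sup_eq_right, ← smul_zero c, ← smul_sup_of_nonneg hc, sup_eq_right.2 hb]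
  PosSMulMono.toPosSMulStrictMono

end UniformSpace.Completion

def Renormed {X : Type*} [AddCommGroup X] [Module ℝ X] (_p : Seminorm ℝ X) : Type _ := X

namespace Renormed

variable {X : Type*} [AddCommGroup X] [Module ℝ X] (p : Seminorm ℝ X)

instance : SeminormedAddCommGroup (Renormed p) := p.toAddGroupSeminorm.toSeminormedAddCommGroup

instance : Module ℝ (Renormed p) := inferInstanceAs (Module ℝ X)

def linearEquiv : X ≃ₗ[ℝ] Renormed p := LinearEquiv.refl ℝ X

theorem norm_linearEquiv (x : X) : ‖linearEquiv p x‖ = p x := rfl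

instance : NormedSpace ℝ (Renormed p) where
  norm_smul_le r x := (map_smul_eq_mul p r x).le

instance [Lattice X] : Lattice (Renormed p) := inferInstanceAs (Lattice X)

instance [Lattice X] [IsOrderedAddMonoid X] : IsOrderedAddMonoid (Renormed p) :=
  inferInstanceAs (IsOrderedAddMonoid X)

instance [Lattice X] [PosSMulStrictMono ℝ X] : PosSMulStrictMono ℝ (Renormed p) :=
  inferInstanceAs (PosSMulStrictMono ℝ X)

theorem hasSolidSeminorm [Lattice X] (hp : ∀ ⦃u v : X⦄, |u| ≤ |v| → p u ≤ p v) :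
    HasSolidSeminorm (Renormed p) :=
  ⟨hp⟩

end Renormed

theorem exists_isClassD_norm_eq {X : Type} [NormedAddCommGroup X] [Lattice X] [HasSolidNorm X]
    [IsOrderedAddMonoid X] [NormedSpace ℝ X] [PosSMulStrictMono ℝ X]
    (p : Seminorm ℝ X) (hp : ∀ ⦃u v : X⦄, |u| ≤ |v| → p u ≤ p v) {C : ℝ}
    (hC : ∀ x, p x ≤ C * ‖x‖) :
    ∃ (Y : BanachLat) (U : X →L[ℝ] Y), IsClassD U ∧ ∀ x, ‖U x‖ = p x := by
  have := Renormed.hasSolidSeminorm p hp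
  let e := Renormed.linearEquiv p
  let U : X →L[ℝ] Completion (Renormed p) :=
    LinearMap.mkContinuous (Completion.toComplL.toLinearMap ∘ₗ e.toLinearMap) C fun x => by
      simpa [e, Renormed.norm_linearEquiv] using hC x
  refine ⟨⟨Completion (Renormed p)⟩, U, ⟨fun a b => Completion.coe_sup (e a) (e b), ?_⟩,
    fun x => Completion.norm_coe (e x)⟩
  exact Completion.denseRange_coe.comp e.surjective.denseRange (Completion.continuous_coe _)

theorem exists_smul_closedBall_subset_preimage_subset_smul {X Y E : Type*}
    [NormedAddCommGroup X] [NormedSpace ℝ X] [NormedAddCommGroup Y] [NormedSpace ℝ Y]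
    [NormedAddCommGroup E] [NormedSpace ℝ E] (U : X →L[ℝ] Y) (V : Y →L[ℝ] E) :
    ∃ c : ℝ, 1 ≤ c ∧ c⁻¹ • closedBall (0 : X) 1 ⊆ U ⁻¹' closedBall 0 1 ∧
      U ⁻¹' closedBall 0 1 ⊆ c • (V.comp U) ⁻¹' closedBall 0 1 := by
  let c := max 1 (max ‖U‖ ‖V‖)
  have hc : 0 < c := zero_lt_one.trans_le (le_max_left _ _)
  refine ⟨c, le_max_left _ _, ?_, ?_⟩
  · rw [← Set.subset_smul_set_iff₀ hc.ne']
    refine preimage_closedBall_subset_smul LinearMap.id U.toLinearMap hc fun x => ?_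
    exact U.le_of_opNorm_le ((le_max_left _ _).trans (le_max_right _ _)) x
  · refine preimage_closedBall_subset_smul U.toLinearMap (V.comp U).toLinearMap hc fun x => ?_
    exact V.le_of_opNorm_le ((le_max_right _ _).trans (le_max_right _ _)) (U x)

theorem exists_classD_factorization_of_isSolid {X : Type} [NormedAddCommGroup X] [Lattice X]
    [HasSolidNorm X] [IsOrderedAddMonoid X] [NormedSpace ℝ X] [PosSMulStrictMono ℝ X]
    {E : Type*} [NormedAddCommGroup E] [NormedSpace ℝ E] [CompleteSpace E] (T : X →L[ℝ] E)
    {S : Set X} (hcl : IsClosed S) (hconv : Convex ℝ S) (hsolid : IsSolid S) {c : ℝ} (hc : 0 < c)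
    (hball : c⁻¹ • closedBall (0 : X) 1 ⊆ S) (hT : S ⊆ c • T ⁻¹' closedBall 0 1) :
    ∃ (Y : BanachLat) (U : X →L[ℝ] Y) (V : Y →L[ℝ] E),
      IsClassD U ∧ T = V.comp U ∧ U ⁻¹' closedBall 0 1 = S := by
  have hS : S ∈ 𝓝 (0 : X) := by
    rw [smul_unitClosedBall, Real.norm_of_nonneg (inv_nonneg.2 hc.le)] at hball
    exact Filter.mem_of_superset (closedBall_mem_nhds 0 (inv_pos.2 hc)) hball
  have habs : Absorbent ℝ S := absorbent_nhds_zero hS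
  obtain ⟨Y, U, hU, hUS⟩ := exists_isClassD_norm_eq (gaugeSeminorm hsolid.balanced hconv habs)
    (fun _ _ => gauge_le_gauge_of_abs_le hsolid habs)
    (gauge_le_mul_norm_of_smul_closedBall_subset hc hball)
  simp only [gaugeSeminorm_toFun] at hUS
  have hTU : ∀ x, ‖T x‖ ≤ c * ‖U x‖ := fun x => by
    rw [hUS]; exact norm_le_mul_gauge_of_subset_smul habs T hc hT x
  refine ⟨Y, U, T.toLinearMap.extendOfNorm U.toLinearMap, hU, ?_, ?_⟩
  · ext x
    exact (LinearMap.extendOfNorm_eq hU.2 ⟨c, hTU⟩ x).symm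
  · ext x
    rw [Set.mem_preimage, mem_closedBall_zero_iff, hUS, gauge_le_one_iff_mem_closure hconv hS,
      hcl.closure_eq]

theorem exists_latticeIsometry_of_norm_eq {X : Type*} [NormedAddCommGroup X] [Lattice X]
    [HasSolidNorm X] [IsOrderedAddMonoid X] [NormedSpace ℝ X]
    {Y₁ Y₂ : Type*} [NormedAddCommGroup Y₁] [Lattice Y₁] [HasSolidNorm Y₁] [IsOrderedAddMonoid Y₁]
    [NormedSpace ℝ Y₁] [CompleteSpace Y₁] [NormedAddCommGroup Y₂] [Lattice Y₂] [HasSolidNorm Y₂]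
    [IsOrderedAddMonoid Y₂] [NormedSpace ℝ Y₂] [CompleteSpace Y₂]
    {U₁ : X →L[ℝ] Y₁} {U₂ : X →L[ℝ] Y₂} (hU₁ : IsClassD U₁) (hU₂ : IsClassD U₂)
    (h : ∀ x, ‖U₁ x‖ = ‖U₂ x‖) :
    ∃ ι : Y₁ ≃ₗᵢ[ℝ] Y₂, IsLatHom ι ∧ ∀ x, U₂ x = ι (U₁ x) := by
  let ι := (LinearEquiv.refl ℝ X).extendOfIsometry U₁.toLinearMap U₂.toLinearMap hU₁.2 hU₂.2
    fun x => (h x).symm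
  have hι : ∀ x, U₂ x = ι (U₁ x) := fun x =>
    (LinearEquiv.extendOfIsometry_eq (LinearEquiv.refl ℝ X) _ _ hU₁.2 hU₂.2 _ x).symm
  refine ⟨ι, hU₁.1.of_comp_denseRange hU₁.2 ι.continuous fun a b => ?_, hι⟩
  simp only [Function.comp_apply, ← hι, hU₂.1 a b]

theorem classD_factorization_correspondence_general
    {X : Type} [NormedAddCommGroup X] [Lattice X] [HasSolidNorm X]
    [IsOrderedAddMonoid X] [NormedSpace ℝ X] [PosSMulStrictMono ℝ X]
    {E : Type} [NormedAddCommGroup E] [NormedSpace ℝ E] [CompleteSpace E]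
    (T : X →L[ℝ] E)
    {Y : Type} [NormedAddCommGroup Y] [Lattice Y] [HasSolidNorm Y]
    [IsOrderedAddMonoid Y] [NormedSpace ℝ Y]
    {Y₁ : Type} [NormedAddCommGroup Y₁] [Lattice Y₁] [HasSolidNorm Y₁]
    [IsOrderedAddMonoid Y₁] [NormedSpace ℝ Y₁] [CompleteSpace Y₁]
    {Y₂ : Type} [NormedAddCommGroup Y₂] [Lattice Y₂] [HasSolidNorm Y₂]
    [IsOrderedAddMonoid Y₂] [NormedSpace ℝ Y₂] [CompleteSpace Y₂] :
    -- (i)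
    (∀ (U : X →L[ℝ] Y) (V : Y →L[ℝ] E), IsClassD U → T = V.comp U →
      IsClosed (⇑U ⁻¹' Metric.closedBall 0 1) ∧
      Convex ℝ (⇑U ⁻¹' Metric.closedBall 0 1) ∧
      IsSolid (⇑U ⁻¹' Metric.closedBall 0 1) ∧
      ∃ c : ℝ, 1 ≤ c ∧
        c⁻¹ • (Metric.closedBall (0 : X) 1) ⊆ ⇑U ⁻¹' Metric.closedBall 0 1 ∧
        ⇑U ⁻¹' Metric.closedBall 0 1 ⊆ c • (⇑T ⁻¹' Metric.closedBall 0 1)) ∧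
    -- (ii)
    (∀ S : Set X, IsClosed S → Convex ℝ S → IsSolid S →
      (∃ c : ℝ, 1 ≤ c ∧ c⁻¹ • (Metric.closedBall (0 : X) 1) ⊆ S ∧
        S ⊆ c • (⇑T ⁻¹' Metric.closedBall 0 1)) →
      ∃ (Y' : BanachLat) (U : X →L[ℝ] Y') (V : Y' →L[ℝ] E),
        IsClassD U ∧ T = V.comp U ∧ ⇑U ⁻¹' Metric.closedBall 0 1 = S) ∧
    -- (iii)
    (∀ (U₁ : X →L[ℝ] Y₁) (V₁ : Y₁ →L[ℝ] E) (U₂ : X →L[ℝ] Y₂) (V₂ : Y₂ →L[ℝ] E),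
      IsClassD U₁ → T = V₁.comp U₁ → IsClassD U₂ → T = V₂.comp U₂ →
      ⇑U₁ ⁻¹' Metric.closedBall 0 1 = ⇑U₂ ⁻¹' Metric.closedBall 0 1 →
      ∃ ι : Y₁ ≃ₗᵢ[ℝ] Y₂, IsLatHom ⇑ι ∧
        (∀ x : X, U₂ x = ι (U₁ x)) ∧ (∀ y : Y₁, V₁ y = V₂ (ι y))) := by
  refine ⟨fun U V hU hTVU => ?_, fun S hcl hconv hsolid ⟨c, hc, hball, hT⟩ =>
    exists_classD_factorization_of_isSolid T hcl hconv hsolid (zero_lt_one.trans_le hc) hball hT,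
    fun U₁ V₁ U₂ V₂ hU₁ hT₁ hU₂ hT₂ hpre => ?_⟩
  · subst hTVU
    exact ⟨isClosed_closedBall.preimage U.continuous,
      (convex_closedBall 0 1).linear_preimage U.toLinearMap, (isSolid_closedBall 1).preimage hU.1,
      exists_smul_closedBall_subset_preimage_subset_smul U V⟩
  · have hnorm : ∀ x, ‖U₁ x‖ = ‖U₂ x‖ := fun x => by
      rw [← gauge_preimage_closedBall U₁, ← gauge_preimage_closedBall U₂, hpre]
    obtain ⟨ι, hι, hUι⟩ := exists_latticeIsometry_of_norm_eq hU₁ hU₂ hnorm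
    refine ⟨ι, hι, hUι, congrFun (hU₁.2.equalizer V₁.continuous (by fun_prop) ?_)⟩
    ext x
    simp only [Function.comp_apply, ← hUι, ← ContinuousLinearMap.comp_apply, ← hT₁, ← hT₂]

/-- Correspondence between Class 𝒟 factorizations of a nonzero operator
`T : X → E` and closed convex solid subsets `S` of `X` with
`c⁻¹ • B_X ⊆ S ⊆ c • T⁻¹(B_E)` for some `c ≥ 1`. -/
theorem classD_factorization_correspondence
    {X : Type} [NormedAddCommGroup X] [Lattice X] [HasSolidNorm X]
    [IsOrderedAddMonoid X] [NormedSpace ℝ X] [PosSMulStrictMono ℝ X]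
    [CompleteSpace X]
    {E : Type} [NormedAddCommGroup E] [NormedSpace ℝ E] [CompleteSpace E]
    (T : X →L[ℝ] E) (hT : T ≠ 0)
    {Y : Type} [NormedAddCommGroup Y] [Lattice Y] [HasSolidNorm Y]
    [IsOrderedAddMonoid Y] [NormedSpace ℝ Y] [PosSMulStrictMono ℝ Y]
    [CompleteSpace Y]
    {Y₁ : Type} [NormedAddCommGroup Y₁] [Lattice Y₁] [HasSolidNorm Y₁]
    [IsOrderedAddMonoid Y₁] [NormedSpace ℝ Y₁] [PosSMulStrictMono ℝ Y₁]
    [CompleteSpace Y₁]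
    {Y₂ : Type} [NormedAddCommGroup Y₂] [Lattice Y₂] [HasSolidNorm Y₂]
    [IsOrderedAddMonoid Y₂] [NormedSpace ℝ Y₂] [PosSMulStrictMono ℝ Y₂]
    [CompleteSpace Y₂] :
    -- (i)
    (∀ (U : X →L[ℝ] Y) (V : Y →L[ℝ] E), IsClassD U → T = V.comp U →
      IsClosed (⇑U ⁻¹' Metric.closedBall 0 1) ∧
      Convex ℝ (⇑U ⁻¹' Metric.closedBall 0 1) ∧
      IsSolid (⇑U ⁻¹' Metric.closedBall 0 1) ∧
      ∃ c : ℝ, 1 ≤ c ∧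
        c⁻¹ • (Metric.closedBall (0 : X) 1) ⊆ ⇑U ⁻¹' Metric.closedBall 0 1 ∧
        ⇑U ⁻¹' Metric.closedBall 0 1 ⊆ c • (⇑T ⁻¹' Metric.closedBall 0 1)) ∧
    -- (ii)
    (∀ S : Set X, IsClosed S → Convex ℝ S → IsSolid S →
      (∃ c : ℝ, 1 ≤ c ∧ c⁻¹ • (Metric.closedBall (0 : X) 1) ⊆ S ∧
        S ⊆ c • (⇑T ⁻¹' Metric.closedBall 0 1)) →
      ∃ (Y' : BanachLat) (U : X →L[ℝ] Y') (V : Y' →L[ℝ] E),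
        IsClassD U ∧ T = V.comp U ∧ ⇑U ⁻¹' Metric.closedBall 0 1 = S) ∧
    -- (iii)
    (∀ (U₁ : X →L[ℝ] Y₁) (V₁ : Y₁ →L[ℝ] E) (U₂ : X →L[ℝ] Y₂) (V₂ : Y₂ →L[ℝ] E),
      IsClassD U₁ → T = V₁.comp U₁ → IsClassD U₂ → T = V₂.comp U₂ →
      ⇑U₁ ⁻¹' Metric.closedBall 0 1 = ⇑U₂ ⁻¹' Metric.closedBall 0 1 →
      ∃ ι : Y₁ ≃ₗᵢ[ℝ] Y₂, IsLatHom ⇑ι ∧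
        (∀ x : X, U₂ x = ι (U₁ x)) ∧ (∀ y : Y₁, V₁ y = V₂ (ι y))) :=
  classD_factorization_correspondence_general T


end
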